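/- Fix α > 1/2 and 0 < ν, and set β := 2να/π. For each integer n > ν set R := 2·log(n/ν), I := (π/2)·e^{R/2}, H := 4·log R, let D := (−I, I] × [0, R], and let μ_{α,n} be the measure on D with density β·e^{−αy} with respect to Lebesgue measure. For x ∈ ℝ write |x|_Φ := min(|x|, 2I − |x|), and for p₀ = (x₀, y₀) ∈ D define B(p₀) := {(x, y) ∈ D : cosh(R − y₀)·cosh(R − y) − sinh(R − y₀)·sinh(R − y)·cos(2·e^{−R/2}·|x − x₀|_Φ) ≤ cosh R}. Then there exist η > 0 (depending only on α and ν) and n₀ such that for all n ≥ n₀ and all p₀ = (x₀, y₀) ∈ D: μ_{α,n}( B(p₀) ∩ ((−I, I] × [0, H]) ) ≤ η·e^{y₀/2}. -/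
import Mathlib


open MeasureTheory

/-- `R := 2 log(n/ν)`. -/
noncomputable def Rpar (ν : ℝ) (n : ℕ) : ℝ := 2 * Real.log (n / ν)

/-- `I := (π/2) e^{R/2}`, the half-length of the rectangle. -/
noncomputable def Ipar (ν : ℝ) (n : ℕ) : ℝ := (Real.pi / 2) * Real.exp (Rpar ν n / 2)

/-- `H := 4 log R`, the height cutoff. -/
noncomputable def Hpar (ν : ℝ) (n : ℕ) : ℝ := 4 * Real.log (Rpar ν n)

/-- The rectangle `D := (−I, I] × [0, R]`. -/
noncomputable def Dpar (ν : ℝ) (n : ℕ) : Set (ℝ × ℝ) :=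
  Set.Ioc (-Ipar ν n) (Ipar ν n) ×ˢ Set.Icc 0 (Rpar ν n)

/-- `|x|_Φ := min(|x|, 2I − |x|)`. -/
noncomputable def phiAbs (I x : ℝ) : ℝ := min |x| (2 * I - |x|)

/-- The measure on `D` with density `β e^{−αy}` (with `β = 2να/π`) w.r.t. Lebesgue measure. -/
noncomputable def muPar (α ν : ℝ) (n : ℕ) : Measure (ℝ × ℝ) :=
  ((volume : Measure (ℝ × ℝ)).restrict (Dpar ν n)).withDensity
    (fun p => ENNReal.ofReal ((2 * ν * α / Real.pi) * Real.exp (-α * p.2)))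

/-- The hyperbolic ball `B(p₀)` in the rectangle coordinates. -/
noncomputable def ballPar (ν : ℝ) (n : ℕ) (x₀ y₀ : ℝ) : Set (ℝ × ℝ) :=
  {p ∈ Dpar ν n |
    Real.cosh (Rpar ν n - y₀) * Real.cosh (Rpar ν n - p.2) -
        Real.sinh (Rpar ν n - y₀) * Real.sinh (Rpar ν n - p.2) *
          Real.cos (2 * Real.exp (-Rpar ν n / 2) * phiAbs (Ipar ν n) (p.1 - x₀)) ≤
      Real.cosh (Rpar ν n)}


lemma my_sinh (t : ℝ) (ht : 1 ≤ t) : Real.exp t / 4 ≤ Real.sinh t := by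
  rw [Real.sinh_eq]
  have h1 : Real.exp (-t) * Real.exp t = 1 := by rw [← Real.exp_add]; simp
  have h2 : (2 : ℝ) ≤ Real.exp t := by
    have h3 := Real.add_one_le_exp 1
    have h4 := Real.exp_le_exp.mpr ht
    linarith
  nlinarith [Real.exp_pos (-t)]

lemma my_cosh (t : ℝ) (ht : 0 ≤ t) : Real.cosh t ≤ Real.exp t := by
  rw [Real.cosh_eq]
  have : Real.exp (-t) ≤ Real.exp t := Real.exp_le_exp.mpr (by linarith)
  linarith

set_option maxHeartbeats 1000000 in
lemma cancel_left {X s t : ℝ} (hX : 0 < X) (h : X * s ≤ X * t) : s ≤ t :=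
  le_of_mul_le_mul_left h hX

lemma sqrt_step {φ p E : ℝ} (hφ0 : 0 ≤ φ) (hp : 0 < p) (hE : 0 < E)
    (h : φ ^ 2 ≤ 2 * p ^ 2 * (E * E)) : φ ≤ 2 * p * E := by
  nlinarith [mul_pos hp hE, sq_nonneg (φ - 2 * p * E)]

lemma geom_core {R I x₀ y₀ x y : ℝ}
    (hIdef : I = Real.pi / 2 * Real.exp (R / 2))
    (hR : 100 ≤ R)
    (hy0a : 0 ≤ y₀) (hy0 : y₀ ≤ R - 1)
    (hx0 : -I < x₀) (hx0' : x₀ ≤ I)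
    (hx : -I < x) (hx' : x ≤ I)
    (hya : 0 ≤ y) (hyb : y ≤ R - 1)
    (hineq : Real.cosh (R - y₀) * Real.cosh (R - y) -
        Real.sinh (R - y₀) * Real.sinh (R - y) *
          Real.cos (2 * Real.exp (-R / 2) * phiAbs I (x - x₀)) ≤ Real.cosh R) :
    phiAbs I (x - x₀) ≤ 2 * Real.pi * Real.exp ((y + y₀) / 2) := by
  have hπ := Real.pi_pos
  have hI : 0 < I := by rw [hIdef]; positivity
  set u := x - x₀ with hudef
  have hu2I : |u| ≤ 2 * I := abs_le.mpr ⟨by rw [hudef]; linarith, by rw [hudef]; linarith⟩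
  set φ := phiAbs I u with hφdef
  have hφmin : φ = min |u| (2 * I - |u|) := rfl
  have hφ0 : 0 ≤ φ := by rw [hφmin]; exact le_min (abs_nonneg _) (by linarith)
  have hφI : φ ≤ I := by
    rw [hφmin]; rcases le_total |u| (2 * I - |u|) with h | h
    · rw [min_eq_left h]; linarith
    · rw [min_eq_right h]; linarith
  set θ := 2 * Real.exp (-R / 2) * φ with hθdef
  have hexp1 : Real.exp (-R / 2) * Real.exp (R / 2) = 1 := by
    rw [← Real.exp_add, show -R / 2 + R / 2 = (0 : ℝ) by ring, Real.exp_zero]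
  have hθ0 : 0 ≤ θ := by positivity
  have hθπ : θ ≤ Real.pi := by
    have h1 : θ ≤ 2 * Real.exp (-R / 2) * I :=
      mul_le_mul_of_nonneg_left hφI (by positivity)
    have h2 : 2 * Real.exp (-R / 2) * I = Real.pi := by
      rw [hIdef]; linear_combination Real.pi * hexp1
    linarith
  have hcos : Real.cos θ ≤ 1 - 2 / Real.pi ^ 2 * θ ^ 2 :=
    Real.cos_le_one_sub_mul_cos_sq (abs_le.mpr ⟨by linarith, hθπ⟩)
  set a := R - y₀ with hadef
  set b := R - y with hbdef
  have ha1 : 1 ≤ a := by rw [hadef]; linarith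
  have hb1 : 1 ≤ b := by rw [hbdef]; linarith
  have hsa := my_sinh a ha1
  have hsb := my_sinh b hb1
  have hkey : Real.sinh a * Real.sinh b * (1 - Real.cos θ) ≤
      Real.cosh R - Real.cosh (a - b) := by
    linear_combination hineq + Real.cosh_sub a b
  have hcR : Real.cosh R ≤ Real.exp R := my_cosh R (by linarith)
  have hone := Real.one_le_cosh (a - b)
  have h1 : Real.exp a / 4 * (Real.exp b / 4) ≤ Real.sinh a * Real.sinh b :=
    mul_le_mul hsa hsb (by positivity) (le_trans (by positivity) hsa)
  have h2 : 2 / Real.pi ^ 2 * θ ^ 2 ≤ 1 - Real.cos θ := by linarith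
  have chain : Real.exp a / 4 * (Real.exp b / 4) * (2 / Real.pi ^ 2 * θ ^ 2) ≤
      Real.exp R := by
    have := mul_le_mul h1 h2 (by positivity) (le_trans (by positivity) h1)
    linarith
  have key1 : Real.exp a * Real.exp b * (Real.exp (-R / 2) * Real.exp (-R / 2)) *
      Real.exp (y + y₀) = Real.exp R := by
    rw [← Real.exp_add, ← Real.exp_add, ← Real.exp_add, ← Real.exp_add]
    congr 1
    rw [hadef, hbdef]; ring
  have hL2 : Real.exp a / 4 * (Real.exp b / 4) * (2 / Real.pi ^ 2 * θ ^ 2) *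
      Real.exp (y + y₀) = Real.exp R * φ ^ 2 / (2 * Real.pi ^ 2) := by
    rw [hθdef]
    linear_combination (φ ^ 2 / (2 * Real.pi ^ 2)) * key1
  have hφsq : φ ^ 2 ≤ 2 * Real.pi ^ 2 * Real.exp (y + y₀) := by
    have hm := mul_le_mul_of_nonneg_right chain (Real.exp_pos (y + y₀)).le
    rw [hL2] at hm
    have hm' : Real.exp R * φ ^ 2 ≤ Real.exp R * Real.exp (y + y₀) * (2 * Real.pi ^ 2) :=
      (div_le_iff₀ (by positivity)).mp hm
    refine cancel_left (Real.exp_pos R) ?_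
    calc Real.exp R * φ ^ 2 ≤ Real.exp R * Real.exp (y + y₀) * (2 * Real.pi ^ 2) := hm'
      _ = Real.exp R * (2 * Real.pi ^ 2 * Real.exp (y + y₀)) := by ring
  have hsqE : Real.exp ((y + y₀) / 2) * Real.exp ((y + y₀) / 2) = Real.exp (y + y₀) := by
    rw [← Real.exp_add]; ring_nf
  refine sqrt_step hφ0 hπ (Real.exp_pos ((y + y₀) / 2)) ?_
  rw [hsqE]; exact hφsq

lemma aux_sum (α ν : ℝ) (hα : 1 / 2 < α) (hν : 0 < ν) (n : ℕ) (A : ℝ) (hA : 0 ≤ A)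
    (N : ℕ) (B : ℕ → Set ℝ) (hBm : ∀ k, MeasurableSet (B k))
    (hBv : ∀ k, volume (B k) ≤ ENNReal.ofReal (A * Real.exp (k / 2)))
    (S : Set (ℝ × ℝ))
    (hS : S ⊆ ⋃ k ∈ Finset.range N, B k ×ˢ Set.Icc (k : ℝ) (k + 1)) :
    muPar α ν n S ≤
      ENNReal.ofReal ((2 * ν * α / Real.pi) * A * (1 - Real.exp (1 / 2 - α))⁻¹) := by
  have hπ := Real.pi_pos
  set β := 2 * ν * α / Real.pi with hβ
  have hβ0 : 0 < β := by positivity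
  set q := Real.exp (1 / 2 - α) with hqdef
  have hq0 : 0 < q := Real.exp_pos _
  have hq1 : q < 1 := Real.exp_lt_one_iff.mpr (by linarith)
  have hk : ∀ k : ℕ, muPar α ν n (B k ×ˢ Set.Icc (k : ℝ) (k + 1)) ≤
      ENNReal.ofReal (β * A * q ^ k) := by
    intro k
    have hT : MeasurableSet (B k ×ˢ Set.Icc (k : ℝ) (k + 1)) :=
      (hBm k).prod measurableSet_Icc
    rw [muPar, withDensity_apply _ hT]
    have step1 : ∫⁻ p in B k ×ˢ Set.Icc (k : ℝ) (k + 1),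
        ENNReal.ofReal (β * Real.exp (-α * p.2)) ∂((volume : Measure (ℝ × ℝ)).restrict (Dpar ν n))
        ≤ ENNReal.ofReal (β * Real.exp (-α * k)) *
          ((volume : Measure (ℝ × ℝ)).restrict (Dpar ν n)) (B k ×ˢ Set.Icc (k : ℝ) (k + 1)) := by
      rw [← setLIntegral_const]
      refine setLIntegral_mono' hT fun p hp => ?_
      refine ENNReal.ofReal_le_ofReal (mul_le_mul_of_nonneg_left ?_ hβ0.le)
      exact Real.exp_le_exp.mpr (by nlinarith [hp.2.1, hα])
    refine step1.trans ?_
    have step2 : ((volume : Measure (ℝ × ℝ)).restrict (Dpar ν n))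
        (B k ×ˢ Set.Icc (k : ℝ) (k + 1)) ≤ ENNReal.ofReal (A * Real.exp (k / 2)) := by
      refine (Measure.restrict_apply_le _ _).trans ?_
      rw [Measure.volume_eq_prod, Measure.prod_prod, Real.volume_Icc]
      have : ENNReal.ofReal ((k : ℝ) + 1 - k) = 1 := by norm_num
      rw [this, mul_one]
      exact hBv k
    calc ENNReal.ofReal (β * Real.exp (-α * k)) *
          ((volume : Measure (ℝ × ℝ)).restrict (Dpar ν n)) (B k ×ˢ Set.Icc (k : ℝ) (k + 1))
        ≤ ENNReal.ofReal (β * Real.exp (-α * k)) * ENNReal.ofReal (A * Real.exp (k / 2)) :=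
          mul_le_mul_right step2 _
      _ = ENNReal.ofReal (β * A * q ^ k) := by
          rw [← ENNReal.ofReal_mul (by positivity)]
          congr 1
          rw [hqdef, ← Real.exp_nat_mul,
            show (k:ℝ) * (1/2 - α) = -α * k + k/2 by ring, Real.exp_add]
          ring
  calc muPar α ν n S ≤ muPar α ν n (⋃ k ∈ Finset.range N, B k ×ˢ Set.Icc (k : ℝ) (k + 1)) :=
        measure_mono hS
    _ ≤ ∑ k ∈ Finset.range N, muPar α ν n (B k ×ˢ Set.Icc (k : ℝ) (k + 1)) :=
        measure_biUnion_finset_le _ _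
    _ ≤ ∑ k ∈ Finset.range N, ENNReal.ofReal (β * A * q ^ k) :=
        Finset.sum_le_sum fun k _ => hk k
    _ = ENNReal.ofReal (∑ k ∈ Finset.range N, β * A * q ^ k) :=
        (ENNReal.ofReal_sum_of_nonneg fun k _ => by positivity).symm
    _ ≤ ENNReal.ofReal (β * A * (1 - q)⁻¹) := by
        refine ENNReal.ofReal_le_ofReal ?_
        rw [← Finset.mul_sum]
        refine mul_le_mul_of_nonneg_left ?_ (by positivity)
        have hsum : ∑ k ∈ Finset.range N, q ^ k ≤ ∑' k : ℕ, q ^ k :=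
          Summable.sum_le_tsum _ (fun k _ => by positivity)
            (summable_geometric_of_lt_one hq0.le hq1)
        rwa [tsum_geometric_of_lt_one hq0.le hq1] at hsum

set_option maxHeartbeats 1000000 in
theorem stmt14 (α ν : ℝ) (hα : 1 / 2 < α) (hν : 0 < ν) :
    ∃ η : ℝ, 0 < η ∧ ∃ n₀ : ℕ, ∀ n : ℕ, n₀ ≤ n → ν < (n : ℝ) →
      ∀ x₀ y₀ : ℝ, (x₀, y₀) ∈ Dpar ν n →
        muPar α ν n
            (ballPar ν n x₀ y₀ ∩
              Set.Ioc (-Ipar ν n) (Ipar ν n) ×ˢ Set.Icc 0 (Hpar ν n)) ≤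
          ENNReal.ofReal (η * Real.exp (y₀ / 2)) := by
  have hπ := Real.pi_pos
  set q := Real.exp (1 / 2 - α) with hq
  have hq1 : q < 1 := Real.exp_lt_one_iff.mpr (by linarith)
  have hq0 : 0 < q := Real.exp_pos _
  refine ⟨2 * ν * α / Real.pi * (12 * Real.pi * Real.exp (1 / 2)) * (1 - q)⁻¹, ?_,
    ⌈ν * Real.exp 50⌉₊ + 1, ?_⟩
  · have h1 : 0 < 2 * ν * α / Real.pi := by positivity
    have h2 : 0 < 12 * Real.pi * Real.exp (1 / 2) := by positivity
    have h3 : 0 < (1 - q)⁻¹ := inv_pos.mpr (by linarith)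
    exact mul_pos (mul_pos h1 h2) h3
  intro n hn hνn x₀ y₀ hp0
  have hR : 100 ≤ Rpar ν n := by
    have h1 : ν * Real.exp 50 ≤ (⌈ν * Real.exp 50⌉₊ : ℝ) := Nat.le_ceil _
    have h2 : (⌈ν * Real.exp 50⌉₊ : ℝ) ≤ n := by exact_mod_cast Nat.le_of_succ_le hn
    have h3 : Real.exp 50 ≤ (n : ℝ) / ν := (le_div_iff₀ hν).mpr (by nlinarith)
    have h4 : (50 : ℝ) ≤ Real.log ((n : ℝ) / ν) := by
      have h5 := Real.log_le_log (Real.exp_pos 50) h3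
      rwa [Real.log_exp] at h5
    rw [Rpar]; linarith
  have hHR : Hpar ν n ≤ Rpar ν n - 1 := by
    have hR0 : (0 : ℝ) < Rpar ν n := by linarith
    have hs : Real.sqrt (Rpar ν n) * Real.sqrt (Rpar ν n) = Rpar ν n :=
      Real.mul_self_sqrt hR0.le
    have hs10 : 10 ≤ Real.sqrt (Rpar ν n) := by nlinarith [Real.sqrt_nonneg (Rpar ν n)]
    have hlog2 : Real.log (Real.sqrt (Rpar ν n)) ≤ Real.sqrt (Rpar ν n) - 1 :=
      Real.log_le_sub_one_of_pos (by positivity)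
    have hlogR : Real.log (Rpar ν n) = 2 * Real.log (Real.sqrt (Rpar ν n)) := by
      rw [← hs, Real.log_mul (by positivity) (by positivity), hs]
      ring
    rw [Hpar]
    nlinarith [hs, hs10, hlog2, hlogR]
  have hI0 : 0 < Ipar ν n := by rw [Ipar]; positivity
  simp only [Dpar, Set.mem_prod, Set.mem_Ioc, Set.mem_Icc] at hp0
  obtain ⟨⟨hx01, hx02⟩, hy01, hy02⟩ := hp0
  set S := ballPar ν n x₀ y₀ ∩
    Set.Ioc (-Ipar ν n) (Ipar ν n) ×ˢ Set.Icc 0 (Hpar ν n) with hSdef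
  set N := ⌊Hpar ν n⌋₊ + 1 with hN
  have hcov : ∀ B : ℕ → Set ℝ, (∀ p ∈ S, p.1 ∈ B ⌊p.2⌋₊) →
      S ⊆ ⋃ k ∈ Finset.range N, B k ×ˢ Set.Icc (k : ℝ) (k + 1) := by
    intro B hB p hp
    have hy : p.2 ∈ Set.Icc 0 (Hpar ν n) := hp.2.2
    refine Set.mem_iUnion₂.mpr ⟨⌊p.2⌋₊, ?_, ?_⟩
    · exact Finset.mem_range.mpr (Nat.lt_succ_of_le (Nat.floor_le_floor hy.2))
    · exact Set.mem_prod.mpr ⟨hB p hp,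
        Set.mem_Icc.mpr ⟨Nat.floor_le hy.1, (Nat.lt_floor_add_one p.2).le⟩⟩
  have hA0 : (0 : ℝ) ≤ 12 * Real.pi * Real.exp (1 / 2) * Real.exp (y₀ / 2) := by positivity
  rcases le_or_gt y₀ (Rpar ν n - 1) with hcase | hcase
  · -- main case : y₀ ≤ R - 1
    set L : ℕ → ℝ := fun k => 2 * Real.pi * Real.exp (((k : ℝ) + 1 + y₀) / 2) with hL
    have hLpos : ∀ k, 0 < L k := by intro k; simp only [hL]; positivity
    set B : ℕ → Set ℝ := fun k =>
      (Set.Icc (x₀ - L k) (x₀ + L k) ∪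
        Set.Icc (x₀ + 2 * Ipar ν n - L k) (x₀ + 2 * Ipar ν n + L k)) ∪
      Set.Icc (x₀ - 2 * Ipar ν n - L k) (x₀ - 2 * Ipar ν n + L k) with hB
    have hBm : ∀ k, MeasurableSet (B k) := fun k =>
      (measurableSet_Icc.union measurableSet_Icc).union measurableSet_Icc
    have hBv : ∀ k, volume (B k) ≤
        ENNReal.ofReal ((12 * Real.pi * Real.exp (1 / 2) * Real.exp (y₀ / 2)) *
          Real.exp ((k : ℝ) / 2)) := by
      intro k
      have hIcc : ∀ c : ℝ, volume (Set.Icc (c - L k) (c + L k)) = ENNReal.ofReal (2 * L k) := by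
        intro c; rw [Real.volume_Icc]; congr 1; ring
      calc volume (B k) ≤
          ENNReal.ofReal (2 * L k) + ENNReal.ofReal (2 * L k) + ENNReal.ofReal (2 * L k) := by
            simp only [hB]
            refine (measure_union_le _ _).trans
              (add_le_add ((measure_union_le _ _).trans (add_le_add ?_ ?_)) ?_)
            · exact le_of_eq (hIcc x₀)
            · exact le_of_eq (hIcc (x₀ + 2 * Ipar ν n))
            · exact le_of_eq (hIcc (x₀ - 2 * Ipar ν n))
        _ = ENNReal.ofReal (6 * L k) := by
            rw [← ENNReal.ofReal_add (by positivity) (by positivity),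
              ← ENNReal.ofReal_add (by positivity) (by positivity)]
            congr 1; ring
        _ ≤ ENNReal.ofReal ((12 * Real.pi * Real.exp (1 / 2) * Real.exp (y₀ / 2)) *
              Real.exp ((k : ℝ) / 2)) := by
            refine ENNReal.ofReal_le_ofReal (le_of_eq ?_)
            simp only [hL]
            rw [show ((k : ℝ) + 1 + y₀) / 2 = 1 / 2 + y₀ / 2 + (k : ℝ) / 2 by ring,
              Real.exp_add, Real.exp_add]
            ring
    have hsub : ∀ p ∈ S, p.1 ∈ B ⌊p.2⌋₊ := by
      intro p hp
      have hball : p ∈ ballPar ν n x₀ y₀ := hp.1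
      have hx : p.1 ∈ Set.Ioc (-Ipar ν n) (Ipar ν n) := hp.2.1
      have hy : p.2 ∈ Set.Icc 0 (Hpar ν n) := hp.2.2
      have hφ : phiAbs (Ipar ν n) (p.1 - x₀) ≤ 2 * Real.pi * Real.exp ((p.2 + y₀) / 2) :=
        geom_core rfl hR hy01 hcase hx01 hx02 hx.1 hx.2 hy.1 (by linarith [hy.2]) hball.2
      have hφk : phiAbs (Ipar ν n) (p.1 - x₀) ≤ L ⌊p.2⌋₊ := by
        refine hφ.trans ?_
        simp only [hL]
        have hfl : p.2 ≤ (⌊p.2⌋₊ : ℝ) + 1 := (Nat.lt_floor_add_one p.2).le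
        exact mul_le_mul_of_nonneg_left (Real.exp_le_exp.mpr (by linarith)) (by positivity)
      have hLk : 0 < L ⌊p.2⌋₊ := hLpos _
      have hu : |p.1 - x₀| ≤ 2 * Ipar ν n :=
        abs_le.mpr ⟨by linarith [hx.1], by linarith [hx.2]⟩
      have hmin : min |p.1 - x₀| (2 * Ipar ν n - |p.1 - x₀|) ≤ L ⌊p.2⌋₊ := hφk
      simp only [hB]
      rcases le_or_gt |p.1 - x₀| (L ⌊p.2⌋₊) with h | h
      · have h' := abs_le.mp h
        exact Set.mem_union_left _ (Set.mem_union_left _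
          (Set.mem_Icc.mpr ⟨by linarith [h'.1], by linarith [h'.2]⟩))
      · have h2 : 2 * Ipar ν n - |p.1 - x₀| ≤ L ⌊p.2⌋₊ := by
          rcases min_le_iff.mp hmin with h' | h'
          · linarith
          · exact h'
        rcases le_or_gt 0 (p.1 - x₀) with h3 | h3
        · rw [abs_of_nonneg h3] at h2 hu
          exact Set.mem_union_left _ (Set.mem_union_right _
            (Set.mem_Icc.mpr ⟨by linarith, by linarith⟩))
        · rw [abs_of_neg h3] at h2 hu
          exact Set.mem_union_right _ (Set.mem_Icc.mpr ⟨by linarith, by linarith⟩)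
    have := aux_sum α ν hα hν n
      (12 * Real.pi * Real.exp (1 / 2) * Real.exp (y₀ / 2)) hA0 N B hBm hBv S (hcov B hsub)
    refine this.trans (ENNReal.ofReal_le_ofReal (le_of_eq ?_))
    ring
  · -- boundary case : y₀ > R - 1
    set B : ℕ → Set ℝ := fun _ => Set.Ioc (-Ipar ν n) (Ipar ν n) with hB
    have hBm : ∀ k, MeasurableSet (B k) := fun _ => measurableSet_Ioc
    have hBv : ∀ k, volume (B k) ≤
        ENNReal.ofReal ((12 * Real.pi * Real.exp (1 / 2) * Real.exp (y₀ / 2)) *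
          Real.exp ((k : ℝ) / 2)) := by
      intro k
      simp only [hB]
      rw [Real.volume_Ioc]
      refine ENNReal.ofReal_le_ofReal ?_
      have h1 : Ipar ν n - -Ipar ν n = Real.pi * Real.exp (Rpar ν n / 2) := by
        rw [Ipar]; ring
      rw [h1]
      have h2 : Real.exp (Rpar ν n / 2) ≤ Real.exp (1 / 2) * Real.exp (y₀ / 2) := by
        rw [← Real.exp_add]
        exact Real.exp_le_exp.mpr (by linarith)
      have h3 : (1 : ℝ) ≤ Real.exp ((k : ℝ) / 2) := Real.one_le_exp (by positivity)
      have h4 : Real.pi * Real.exp (Rpar ν n / 2) ≤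
          Real.pi * (Real.exp (1 / 2) * Real.exp (y₀ / 2)) :=
        mul_le_mul_of_nonneg_left h2 hπ.le
      nlinarith [mul_pos (mul_pos hπ (Real.exp_pos (1 / 2 : ℝ))) (Real.exp_pos (y₀ / 2))]
    have hsub : ∀ p ∈ S, p.1 ∈ B ⌊p.2⌋₊ := fun p hp => hp.2.1
    have := aux_sum α ν hα hν n
      (12 * Real.pi * Real.exp (1 / 2) * Real.exp (y₀ / 2)) hA0 N B hBm hBv S (hcov B hsub)
    refine this.trans (ENNReal.ofReal_le_ofReal (le_of_eq ?_))
    ring
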